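/- The flat map ♭ : X × E → (X × E)* of the weak symplectic form ω, defined by ♭(θ,v)(θ₂,v₂) := v₂(θ) − v(θ₂), is an injective continuous linear map; and ♭ is surjective if and only if the canonical embedding ι : X → X** is surjective (i.e. X is reflexive). -/

import Mathlib

open NormedSpace

variable {X : Type*} [NormedAddCommGroup X] [NormedSpace ℂ X]

/-- The flat map `♭ : X × E → (X × E)*` of the weak symplectic form `ω`,
`♭(θ,v)(θ₂,v₂) = v₂(θ) − v(θ₂)`. -/
noncomputable def flatMap (p : X × StrongDual ℂ X) : StrongDual ℂ (X × StrongDual ℂ X) :=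
  (inclusionInDoubleDual ℂ X p.1).comp (ContinuousLinearMap.snd ℂ X (StrongDual ℂ X))
    - p.2.comp (ContinuousLinearMap.fst ℂ X (StrongDual ℂ X))

lemma flatMap_apply (a b : X × StrongDual ℂ X) : flatMap a b = b.2 a.1 - a.2 b.1 := rfl

/-- The flat map `♭` of the weak symplectic form `ω` is an injective continuous linear map,
and it is surjective if and only if the canonical embedding `ι : X → X**` is surjective
(i.e. `X` is reflexive). -/
theorem flatMap_injective_boundedLinear_and_surjective_iff_reflexive
    {X : Type*} [NormedAddCommGroup X] [NormedSpace ℂ X] [CompleteSpace X] :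
    (∀ a b : X × StrongDual ℂ X, flatMap a b = b.2 a.1 - a.2 b.1) ∧
      Function.Injective (flatMap (X := X)) ∧
      IsBoundedLinearMap ℂ (flatMap (X := X)) ∧
      (Function.Surjective (flatMap (X := X)) ↔
        Function.Surjective ⇑(inclusionInDoubleDual ℂ X)) := by
  refine ⟨fun a b => rfl, ?_, ?_, ?_, ?_⟩
  · -- injectivity
    intro a b hab
    have h : ∀ c : X × StrongDual ℂ X, c.2 a.1 - a.2 c.1 = c.2 b.1 - b.2 c.1 := by
      intro c
      have := congrArg (fun f : StrongDual ℂ (X × StrongDual ℂ X) => f c) hab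
      simpa [flatMap_apply] using this
    have h2 : a.2 = b.2 := by
      ext x
      have := h (x, 0)
      simpa using this
    have h1 : a.1 = b.1 := by
      have : ∀ v : StrongDual ℂ X, v (a.1 - b.1) = 0 := by
        intro v
        have := h (0, v)
        simp [h2] at this
        simp [map_sub, this]
      exact sub_eq_zero.mp (eq_zero_of_forall_dual_eq_zero ℂ this)
    exact Prod.ext h1 h2
  · -- bounded linear
    refine ⟨⟨fun p q => ?_, fun c p => ?_⟩, 2, by norm_num, fun p => ?_⟩
    · refine ContinuousLinearMap.ext fun c => ?_
      simp [flatMap_apply]; ring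
    · refine ContinuousLinearMap.ext fun c => ?_
      simp [flatMap_apply]; ring
    · calc ‖flatMap p‖
          ≤ ‖(inclusionInDoubleDual ℂ X p.1).comp (ContinuousLinearMap.snd ℂ X (StrongDual ℂ X))‖
            + ‖p.2.comp (ContinuousLinearMap.fst ℂ X (StrongDual ℂ X))‖ := norm_sub_le ((inclusionInDoubleDual ℂ X p.1).comp (ContinuousLinearMap.snd ℂ X (StrongDual ℂ X))) (p.2.comp (ContinuousLinearMap.fst ℂ X (StrongDual ℂ X)))
        _ ≤ ‖p.1‖ + ‖p.2‖ := by
            gcongr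
            · refine le_trans (ContinuousLinearMap.opNorm_comp_le _ _) ?_
              calc ‖inclusionInDoubleDual ℂ X p.1‖ * ‖ContinuousLinearMap.snd ℂ X (StrongDual ℂ X)‖
                  ≤ ‖p.1‖ * 1 := by
                    gcongr
                    · exact double_dual_bound ℂ X p.1
                    · exact ContinuousLinearMap.norm_snd_le _ _ _
                _ = ‖p.1‖ := mul_one _
            · refine le_trans (ContinuousLinearMap.opNorm_comp_le _ _) ?_
              calc ‖p.2‖ * ‖ContinuousLinearMap.fst ℂ X (StrongDual ℂ X)‖
                  ≤ ‖p.2‖ * 1 := by gcongr; exact ContinuousLinearMap.norm_fst_le _ _ _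
                _ = ‖p.2‖ := mul_one _
        _ ≤ 2 * ‖p‖ := by
            rw [Prod.norm_def, two_mul]
            gcongr
            · exact le_max_left _ _
            · exact le_max_right _ _
  · -- surjective → reflexive
    intro hs Φ
    obtain ⟨a, ha⟩ := hs (Φ.comp (ContinuousLinearMap.snd ℂ X (StrongDual ℂ X)))
    have key : ∀ c : X × StrongDual ℂ X, c.2 a.1 - a.2 c.1 = Φ c.2 := by
      intro c
      have := congrArg (fun f : StrongDual ℂ (X × StrongDual ℂ X) => f c) ha
      simpa [flatMap_apply] using this
    have ha2 : a.2 = 0 := by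
      ext x
      have := key (x, 0)
      simpa using this
    refine ⟨a.1, ?_⟩
    ext v
    have := key (0, v)
    simpa [ha2] using this
  · -- reflexive → surjective
    intro hs f
    obtain ⟨x, hx⟩ := hs (f.comp ((ContinuousLinearMap.inr ℂ X (StrongDual ℂ X))))
    refine ⟨(x, -(f.comp (ContinuousLinearMap.inl ℂ X (StrongDual ℂ X)))), ?_⟩
    refine ContinuousLinearMap.ext fun c => ?_
    have hxv : ∀ v : StrongDual ℂ X, v x = f (0, v) := by
      intro v
      have := congrArg (fun g : StrongDual ℂ (StrongDual ℂ X) => g v) hx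
      simpa using this
    have : f c = f (c.1, 0) + f (0, c.2) := by
      rw [← map_add]
      simp
    simp [flatMap_apply, hxv c.2, this]
    ring
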